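/- Approximate integer distance principle in the plane, hyperbola step: let a₀, a₁ ∈ ℝ² be distinct, c₁ > 0, and let A' be a set of points a with |a| → ∞ along A' such that |a - a₀| - |a - a₁| = c₁ k(a) + o(1) for integers k(a) as |a| → ∞. Then the values |a - a₀| - |a - a₁| take only finitely many limit points, each of the form c₁ k with |c₁ k| ≤ |a₀ - a₁|; hence all but finitely many points of A' lie within o(1) of finitely many hyperbolas (or lines) with foci a₀, a₁. -/

import Mathlib

/-!
Let `f a = |a - a₀| - |a - a₁|`. Every limit value of `f` along `A'` at infinity lies in the
closure of `c₁ ℤ` (because `f a` is within `ε ‖a‖ → 0` of it), which is closed since `c₁ ℤ` is a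
discrete subgroup of `ℝ`; and in the closure of `f '' A'`, which lies in the closed ball of radius
`|a₀ - a₁|` by the triangle inequality. A discrete closed set meets a bounded set in finitely many
points.
-/

open Filter Topology Metric

section LimitValues

variable {E : Type*} [Norm E]

def limitValuesAtInfinity (A : Set E) (f : E → ℝ) : Set ℝ :=
  {L | ∀ δ > 0, ∀ R : ℝ, ∃ a ∈ A, R ≤ ‖a‖ ∧ |f a - L| < δ}

theorem limitValuesAtInfinity_subset_closure_image (A : Set E) (f : E → ℝ) :
    limitValuesAtInfinity A f ⊆ closure (f '' A) := by
  intro L hL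
  refine Metric.mem_closure_iff.2 fun δ hδ => ?_
  obtain ⟨a, haA, -, hclose⟩ := hL δ hδ 0
  exact ⟨f a, Set.mem_image_of_mem f haA, by rwa [Real.dist_eq, abs_sub_comm]⟩

theorem limitValuesAtInfinity_subset_closure_of_approx {A : Set E} {f : E → ℝ} {S : Set ℝ}
    {ε : ℝ → ℝ} (hε : Tendsto ε atTop (𝓝 0)) (happrox : ∀ a ∈ A, ∃ s ∈ S, |f a - s| ≤ ε ‖a‖) :
    limitValuesAtInfinity A f ⊆ closure S := by
  intro L hL
  refine Metric.mem_closure_iff.2 fun η hη => ?_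
  obtain ⟨R, hR⟩ := Metric.tendsto_atTop.1 hε (η / 2) (half_pos hη)
  obtain ⟨a, haA, hRa, hclose⟩ := hL (η / 2) (half_pos hη) R
  obtain ⟨s, hsS, hs⟩ := happrox a haA
  have hεa : ε ‖a‖ < η / 2 := by simpa [Real.dist_eq] using (le_abs_self _).trans_lt (hR ‖a‖ hRa)
  refine ⟨s, hsS, ?_⟩
  calc dist L s ≤ |L - f a| + |f a - s| := abs_sub_le L (f a) s
    _ < η / 2 + η / 2 := by rw [abs_sub_comm] at hclose; linarith
    _ = η := add_halves η

end LimitValues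

theorem finite_inter_zmultiples_of_isBounded (c : ℝ) {K : Set ℝ} (hK : Bornology.IsBounded K) :
    (K ∩ AddSubgroup.zmultiples c).Finite :=
  Metric.finite_isBounded_inter_isClosed
    (isDiscrete_iff_discreteTopology.2
      (inferInstanceAs (DiscreteTopology (AddSubgroup.zmultiples c))))
    hK AddSubgroup.isClosed_of_discrete

theorem abs_dist_sub_dist_le_dist {α : Type*} [PseudoMetricSpace α] (a x y : α) :
    |dist a x - dist a y| ≤ dist x y := by
  simpa only [dist_comm a] using abs_dist_sub_le x y a

theorem hyperbola_step_general (a₀ a₁ : EuclideanSpace ℝ (Fin 2))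
    (c₁ : ℝ)
    (A' : Set (EuclideanSpace ℝ (Fin 2)))
    (ε : ℝ → ℝ) (hε : Tendsto ε atTop (nhds 0))
    (happrox : ∀ a ∈ A', ∃ k : ℤ,
      |(dist a a₀ - dist a a₁) - c₁ * (k : ℝ)| ≤ ε ‖a‖) :
    (∀ L : ℝ,
        (∀ δ > 0, ∀ R : ℝ, ∃ a ∈ A', R ≤ ‖a‖ ∧ |(dist a a₀ - dist a a₁) - L| < δ) →
        ∃ k : ℤ, L = c₁ * (k : ℝ) ∧ |L| ≤ dist a₀ a₁) ∧
      {L : ℝ |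
        ∀ δ > 0, ∀ R : ℝ, ∃ a ∈ A', R ≤ ‖a‖ ∧ |(dist a a₀ - dist a a₁) - L| < δ}.Finite := by
  set f := fun a => dist a a₀ - dist a a₁
  have hlattice : limitValuesAtInfinity A' f ⊆ AddSubgroup.zmultiples c₁ := by
    refine (limitValuesAtInfinity_subset_closure_of_approx hε fun a ha => ?_).trans
      AddSubgroup.isClosed_of_discrete.closure_subset
    obtain ⟨k, hk⟩ := happrox a ha
    exact ⟨c₁ * k, ⟨k, by simp [mul_comm]⟩, hk⟩
  have hball : limitValuesAtInfinity A' f ⊆ closedBall 0 (dist a₀ a₁) := by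
    refine (limitValuesAtInfinity_subset_closure_image A' f).trans
      (closure_minimal ?_ isClosed_closedBall)
    rintro _ ⟨a, -, rfl⟩
    simpa using abs_dist_sub_dist_le_dist a a₀ a₁
  refine ⟨fun L hL => ?_, ?_⟩
  · obtain ⟨k, rfl⟩ := AddSubgroup.mem_zmultiples_iff.1 (hlattice hL)
    exact ⟨k, by simp [mul_comm], by simpa using hball hL⟩
  · exact (finite_inter_zmultiples_of_isBounded c₁ isBounded_closedBall).subset
      (Set.subset_inter hball hlattice)

theorem hyperbola_step (a₀ a₁ : EuclideanSpace ℝ (Fin 2)) (hne : a₀ ≠ a₁)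
    (c₁ : ℝ) (hc₁ : 0 < c₁)
    (A' : Set (EuclideanSpace ℝ (Fin 2)))
    (ε : ℝ → ℝ) (hε : Tendsto ε atTop (nhds 0))
    (happrox : ∀ a ∈ A', ∃ k : ℤ,
      |(dist a a₀ - dist a a₁) - c₁ * (k : ℝ)| ≤ ε ‖a‖) :
    (∀ L : ℝ,
        (∀ δ > 0, ∀ R : ℝ, ∃ a ∈ A', R ≤ ‖a‖ ∧ |(dist a a₀ - dist a a₁) - L| < δ) →
        ∃ k : ℤ, L = c₁ * (k : ℝ) ∧ |L| ≤ dist a₀ a₁) ∧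
      {L : ℝ |
        ∀ δ > 0, ∀ R : ℝ, ∃ a ∈ A', R ≤ ‖a‖ ∧ |(dist a a₀ - dist a a₁) - L| < δ}.Finite :=
  hyperbola_step_general a₀ a₁ c₁ A' ε hε happrox
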